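/- arXiv:1710.07230 — 2 statements merged into one kernel-verified Lean document; each statement's English description precedes it below -/
import Mathlib

section
/- Let G be a finite abelian group of cardinality N, and n, d with n ≥ 2 log N. The number of sets X ⊆ G with 0 < |X| ≤ n and dim(X) ≤ d is at most N^d · 3^{nd}. -/
open Finset

/-- A finset `S` is dissociated if the only `{-1,0,1}`-combination of its
elements summing to zero is the trivial one. -/
def Dissociated {G : Type*} [AddCommGroup G] (S : Finset G) : Prop :=
  ∀ ε : G → ℤ, (∀ s ∈ S, ε s = -1 ∨ ε s = 0 ∨ ε s = 1) →
    ∑ s ∈ S, ε s • s = 0 → ∀ s ∈ S, ε s = 0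

/-- The additive dimension of `A` : the size of a largest dissociated subset of `A`. -/
noncomputable def addDim {G : Type*} [AddCommGroup G] (A : Finset G) : ℕ :=
  sSup {d : ℕ | ∃ S : Finset G, S ⊆ A ∧ Dissociated S ∧ S.card = d}

/-- `Span(S) = { ∑_{s ∈ S} ε_s s : ε_s ∈ {0, -1, 1} }`. -/
def spn {G : Type*} [AddCommGroup G] (S : Finset G) : Set G :=
  {x | ∃ ε : G → ℤ, (∀ s ∈ S, ε s = -1 ∨ ε s = 0 ∨ ε s = 1) ∧ x = ∑ s ∈ S, ε s • s}

section aux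
variable {G : Type*} [AddCommGroup G]

lemma dissociated_empty : Dissociated (∅ : Finset G) := by
  intro ε _ _ s hs; simp at hs

lemma mem_spn_of_mem {S : Finset G} {x : G} (hx : x ∈ S) : x ∈ spn S := by
  classical
  refine ⟨fun s => if s = x then 1 else 0, fun s _ => by by_cases h : s = x <;> simp [h], ?_⟩
  rw [Finset.sum_congr rfl (g := fun s => if s = x then s else 0)
    (fun s _ => by by_cases h : s = x <;> simp [h])]
  simp [Finset.sum_ite_eq' S x (fun s => s), hx]

lemma subset_spn_of_max {X S : Finset G} (hSX : S ⊆ X) (hS : Dissociated S)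
    (hcard : S.card = addDim X) : ↑X ⊆ spn S := by
  classical
  intro x hx
  by_contra hspn
  have hxS : x ∉ S := fun h => hspn (mem_spn_of_mem h)
  have hdiss : Dissociated (insert x S) := by
    intro ε hε hsum s hs
    have hxval := hε x (mem_insert_self x S)
    rw [Finset.sum_insert hxS] at hsum
    have hεS : ∀ t ∈ S, ε t = -1 ∨ ε t = 0 ∨ ε t = 1 :=
      fun t ht => hε t (mem_insert_of_mem ht)
    rcases hxval with h | h | h
    · exfalso
      apply hspn
      refine ⟨ε, hεS, ?_⟩
      rw [h] at hsum
      simpa using neg_add_eq_zero.mp (by simpa using hsum)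
    · rw [h, zero_smul, zero_add] at hsum
      rcases mem_insert.mp hs with rfl | hsS
      · exact h
      · exact hS ε hεS hsum s hsS
    · exfalso
      apply hspn
      refine ⟨fun t => -ε t, fun t ht => by rcases hεS t ht with h' | h' | h' <;> simp [h'], ?_⟩
      rw [h, one_smul] at hsum
      have : x = -∑ s ∈ S, ε s • s := by
        rw [eq_neg_iff_add_eq_zero]; exact hsum
      rw [this, ← Finset.sum_neg_distrib]
      exact Finset.sum_congr rfl (fun t _ => by rw [neg_smul])
  have hmem : (insert x S).card ∈ {k : ℕ | ∃ S' : Finset G, S' ⊆ X ∧ Dissociated S' ∧ S'.card = k} :=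
    ⟨insert x S, insert_subset hx hSX, hdiss, rfl⟩
  have hbdd : BddAbove {k : ℕ | ∃ S' : Finset G, S' ⊆ X ∧ Dissociated S' ∧ S'.card = k} :=
    ⟨X.card, fun k ⟨S', hS', _, hc⟩ => hc ▸ card_le_card hS'⟩
  have hle := le_csSup hbdd hmem
  rw [card_insert_of_notMem hxS] at hle
  rw [hcard] at hle
  unfold addDim at hle
  omega

lemma exists_spn (X : Finset G) {d : ℕ} (hd : addDim X ≤ d) :
    ∃ S : Finset G, S ⊆ X ∧ S.card ≤ d ∧ ↑X ⊆ spn S := by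
  have hne : (0 : ℕ) ∈ {k : ℕ | ∃ S' : Finset G, S' ⊆ X ∧ Dissociated S' ∧ S'.card = k} :=
    ⟨∅, empty_subset X, dissociated_empty, rfl⟩
  have hbdd : BddAbove {k : ℕ | ∃ S' : Finset G, S' ⊆ X ∧ Dissociated S' ∧ S'.card = k} :=
    ⟨X.card, fun k ⟨S', hS', _, hc⟩ => hc ▸ card_le_card hS'⟩
  obtain ⟨S, hSX, hS, hc⟩ := Nat.sSup_mem ⟨0, hne⟩ hbdd
  exact ⟨S, hSX, by rw [hc]; exact hd, subset_spn_of_max hSX hS hc⟩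

lemma exists_code [DecidableEq G] {n d : ℕ} {X S : Finset G}
    (hne : X.Nonempty) (hcn : X.card ≤ n) (hSd : S.card ≤ d) (hspan : ↑X ⊆ spn S) :
    ∃ p : (Fin d → G) × (Fin n → Fin d → Fin 3),
      Finset.image (fun k => ∑ i : Fin d, (((p.2 k i : ℕ) : ℤ) - 1) • p.1 i) Finset.univ = X := by
  classical
  set m := S.card with hm
  have hchoice : ∀ x : G, x ∈ X → ∃ ε : G → ℤ,
      (∀ s ∈ S, ε s = -1 ∨ ε s = 0 ∨ ε s = 1) ∧ x = ∑ s ∈ S, ε s • s :=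
    fun x hx => hspan hx
  choose ε hε1 hε2 using hchoice
  have hXpos : 0 < X.card := card_pos.mpr hne
  set eS : ℕ → G := fun i => if hi : i < m then (S.equivFin.symm ⟨i, hi⟩ : G) else 0 with heS
  set u : Fin n → G := fun k => if hk : (k : ℕ) < X.card then (X.equivFin.symm ⟨k, hk⟩ : G)
    else (X.equivFin.symm ⟨0, hXpos⟩ : G) with hudef
  have hu : ∀ k, u k ∈ X := by
    intro k; rw [hudef]; dsimp only; split <;> exact Finset.coe_mem _
  have huX : Finset.image u Finset.univ = X := by
    apply Finset.Subset.antisymm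
    · intro x hx
      obtain ⟨k, _, rfl⟩ := Finset.mem_image.mp hx
      exact hu k
    · intro x hx
      set j := X.equivFin ⟨x, hx⟩ with hj
      refine Finset.mem_image.mpr ⟨⟨(j : ℕ), lt_of_lt_of_le j.isLt hcn⟩, Finset.mem_univ _, ?_⟩
      rw [hudef]
      dsimp only
      rw [dif_pos j.isLt]
      have : (⟨(j : ℕ), j.isLt⟩ : Fin X.card) = j := by ext; rfl
      rw [this, hj, Equiv.symm_apply_apply]
  set cN : Fin n → ℕ → ℤ := fun k i => if hi : i < m then ε (u k) (hu k) (eS i) else 0 with hcN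
  have heSm : ∀ i (hi : i < m), eS i ∈ S := by
    intro i hi; rw [heS]; dsimp only; rw [dif_pos hi]; exact Finset.coe_mem _
  have hcNval : ∀ k i, cN k i = -1 ∨ cN k i = 0 ∨ cN k i = 1 := by
    intro k i
    rw [hcN]; dsimp only
    by_cases hi : i < m
    · rw [dif_pos hi]; exact hε1 (u k) (hu k) (eS i) (heSm i hi)
    · rw [dif_neg hi]; right; left; rfl
  set h : Fin n → Fin d → Fin 3 := fun k i =>
    if cN k i = -1 then 0 else if cN k i = 1 then 2 else 1 with hh
  have hcode : ∀ k (i : Fin d), (((h k i : ℕ) : ℤ) - 1) = cN k (i : ℕ) := by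
    intro k i
    rw [hh]; dsimp only
    rcases hcNval k i with hc | hc | hc <;> rw [hc] <;> norm_num
  set g : Fin d → G := fun i => eS (i : ℕ) with hg
  refine ⟨(g, h), ?_⟩
  have hsum : ∀ k : Fin n, ∑ i : Fin d, (((h k i : ℕ) : ℤ) - 1) • g i = u k := by
    intro k
    have e1 : ∑ i : Fin d, (((h k i : ℕ) : ℤ) - 1) • g i
        = ∑ i : Fin d, cN k (i : ℕ) • eS (i : ℕ) := by
      refine Finset.sum_congr rfl (fun i _ => ?_)
      rw [hcode k i, hg]
    have hz : ∀ i ∈ Finset.range d, i ∉ Finset.range m → cN k i • eS i = 0 := by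
      intro i _ him
      have hnm : ¬ i < m := by simpa using him
      rw [hcN]; dsimp only
      rw [dif_neg hnm, zero_smul]
    rw [e1, Fin.sum_univ_eq_sum_range (fun i => cN k i • eS i) d]
    rw [← Finset.sum_subset (Finset.range_subset_range.mpr hSd) hz]
    rw [← Fin.sum_univ_eq_sum_range (fun i => cN k i • eS i) m]
    have e2 : ∀ j : Fin m, cN k (j : ℕ) • eS (j : ℕ)
        = (fun a : ↥S => ε (u k) (hu k) (a : G) • (a : G)) (S.equivFin.symm j) := by
      intro j
      have hj := j.isLt
      have heq : eS (j : ℕ) = (S.equivFin.symm j : G) := by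
        rw [heS]; dsimp only; rw [dif_pos hj]
      rw [hcN]; dsimp only
      rw [dif_pos hj, heq]
    rw [Finset.sum_congr rfl (fun j _ => e2 j)]
    rw [Equiv.sum_comp S.equivFin.symm (fun a : ↥S => ε (u k) (hu k) (a : G) • (a : G))]
    rw [Finset.sum_coe_sort S (fun s => ε (u k) (hu k) s • s)]
    exact (hε2 (u k) (hu k)).symm
  rw [show (fun k => ∑ i : Fin d, (((h k i : ℕ) : ℤ) - 1) • g i) = u from funext hsum]
  exact huX

end aux

theorem count_small_dim_sets' {G : Type*} [AddCommGroup G] [Fintype G]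
    (N n d : ℕ) (hN : N = Fintype.card G) (hn : 2 * Real.log N ≤ (n : ℝ)) :
    {X : Finset G | X.Nonempty ∧ X.card ≤ n ∧ addDim X ≤ d}.ncard ≤
      N ^ d * 3 ^ (n * d) := by
  classical
  set D : (Fin d → G) × (Fin n → Fin d → Fin 3) → Finset G :=
    fun p => Finset.image (fun k => ∑ i : Fin d, (((p.2 k i : ℕ) : ℤ) - 1) • p.1 i)
      Finset.univ with hD
  have hsub : {X : Finset G | X.Nonempty ∧ X.card ≤ n ∧ addDim X ≤ d} ⊆ Set.range D := by
    rintro X ⟨h1, h2, h3⟩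
    obtain ⟨S, _, hSd, hspan⟩ := exists_spn X h3
    obtain ⟨p, hp⟩ := exists_code h1 h2 hSd hspan
    exact ⟨p, hp⟩
  calc {X : Finset G | X.Nonempty ∧ X.card ≤ n ∧ addDim X ≤ d}.ncard
      ≤ (Set.range D).ncard := Set.ncard_le_ncard hsub (Set.finite_range D)
    _ ≤ (Set.univ : Set ((Fin d → G) × (Fin n → Fin d → Fin 3))).ncard := by
        rw [← Set.image_univ]
        exact Set.ncard_image_le Set.finite_univ
    _ = Fintype.card ((Fin d → G) × (Fin n → Fin d → Fin 3)) := by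
        rw [Set.ncard_univ, Nat.card_eq_fintype_card]
    _ = N ^ d * 3 ^ (n * d) := by
        simp only [Fintype.card_prod, Fintype.card_fun, Fintype.card_fin, hN]
        rw [← pow_mul, Nat.mul_comm d n]
end

section
/- Let G be a finite abelian group, X, Y ⊆ G finite nonempty sets with |X| = n, ε ∈ (0, 1/2], and A ⊆ G. If E(X, Y) ≤ |X|²|Y|/K and |σ_A(X, Y)| ≥ ε, then there exist k > ε⁴|Y|K/(4n) and y₁, ..., y_k ∈ Y such that |(X + y_i) ∩ ⋃_{j<i}(X + y_j)| ≤ εn/2 for i = 2, ..., k, and |σ_A(X, {y_j})| ≥ ε/2 for all j = 1, ..., k. -/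
open Finset

/-- The additive energy `E(X, Y)`. -/
def energy {G : Type*} [AddCommGroup G] [DecidableEq G] (X Y : Finset G) : ℕ :=
  (((X ×ˢ X) ×ˢ Y ×ˢ Y).filter fun q => q.1.1 + q.2.1 = q.1.2 + q.2.2).card

/-- `σ_A(X, Y) = (1/(|X||Y|)) ∑_{x ∈ X} ∑_{y ∈ Y} A(x+y) - 1/2`. -/
noncomputable def sigmaA {G : Type*} [AddCommGroup G] [DecidableEq G]
    (A X Y : Finset G) : ℝ :=
  (∑ x ∈ X, ∑ y ∈ Y, (if x + y ∈ A then (1 : ℝ) else 0)) / ((X.card : ℝ) * Y.card) - 1 / 2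

/-! Let `Y'` be the set of `y ∈ Y` with `|σ_A(X, {y})| ≥ ε/2`. As `σ_A(X, Y)` is the mean of the
values `σ_A(X, {y}) ∈ [-1/2, 1/2]`, we get `|Y'| ≥ ε|Y|`. Choose `y₁, y₂, … ∈ Y'` greedily, each
meeting the union `U` of the earlier translates in at most `εn/2` points, until every `z ∈ Y'` has
`|(X + z) ∩ U| > εn/2`. Then `∑_{z ∈ Y} |(X + z) ∩ U| > ε²|Y|n/2`; this sum counts the pairs
`(x, z) ∈ X × Y` with `x + z ∈ U`, so by Cauchy–Schwarz its square is at most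
`|U| E(X, Y) ≤ kn · n²|Y|/K`. -/

section SpreadSequence

variable {α β : Type*} [DecidableEq β]

def IsSpreadSeq (f : α → Finset β) (t : ℝ) {k : ℕ} (y : Fin k → α) : Prop :=
  ∀ i : Fin k, 0 < (i : ℕ) →
    ((#(f (y i) ∩ (Finset.univ.filter fun j : Fin k => j < i).biUnion fun j => f (y j)) : ℝ) ≤ t)

lemma filter_lt_biUnion_snoc {m : ℕ} (f : α → Finset β) (y : Fin m → α) (z : α)
    (i : Fin (m + 1)) :
    ((Finset.univ.filter fun j : Fin (m + 1) => j < i).biUnion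
        fun j => f (Fin.snoc (α := fun _ => α) y z j)) =
      (Finset.univ.filter fun j : Fin m => j.castSucc < i).biUnion fun j => f (y j) := by
  ext b
  simp [Fin.exists_fin_succ', (Fin.le_last i).not_gt]

lemma IsSpreadSeq.snoc {f : α → Finset β} {t : ℝ} {m : ℕ} {y : Fin m → α}
    (hy : IsSpreadSeq f t y) {z : α}
    (hz : (#(f z ∩ Finset.univ.biUnion fun j => f (y j)) : ℝ) ≤ t) :
    IsSpreadSeq f t (Fin.snoc y z : Fin (m + 1) → α) := by
  intro i hi
  rw [filter_lt_biUnion_snoc]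
  induction i using Fin.lastCases with
  | last => simpa [Fin.castSucc_lt_last] using hz
  | cast i => simpa [Fin.castSucc_lt_castSucc_iff] using hy i (by simpa using hi)

lemma exists_saturated_spreadSeq (f : α → Finset β) (S : Finset α) (t : ℝ)
    (ht : ∀ z ∈ S, t < #(f z)) :
    ∃ (k : ℕ) (y : Fin k → α), (∀ i, y i ∈ S) ∧ IsSpreadSeq f t y ∧
      ∀ z ∈ S, t < #(f z ∩ Finset.univ.biUnion fun j => f (y j)) := by
  by_contra! hstuck
  have hlong : ∀ m, ∃ y : Fin m → α,
      Function.Injective y ∧ (∀ i, y i ∈ S) ∧ IsSpreadSeq f t y := by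
    intro m
    induction m with
    | zero => exact ⟨Fin.elim0, fun i => i.elim0, fun i => i.elim0, fun i => i.elim0⟩
    | succ m ih =>
      obtain ⟨y, hinj, hyS, hy⟩ := ih
      obtain ⟨z, hzS, hz⟩ := hstuck m y hyS hy
      have hnew : z ∉ Set.range y := by
        rintro ⟨j, rfl⟩
        have hsub : f (y j) ⊆ Finset.univ.biUnion fun j => f (y j) :=
          subset_biUnion_of_mem (fun j => f (y j)) (mem_univ j)
        rw [inter_eq_left.2 hsub] at hz
        exact (ht _ hzS).not_ge hz
      refine ⟨Fin.snoc y z, Fin.snoc_injective_of_injective hinj hnew, fun i => ?_, hy.snoc hz⟩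
      induction i using Fin.lastCases <;> simp [hyS, hzS]
  obtain ⟨y, hinj, hyS, -⟩ := hlong (#S + 1)
  have := card_le_card_of_injOn y (s := univ) (fun i _ => hyS i) hinj.injOn
  simp at this

end SpreadSequence

section Translates

variable {G : Type*} [Add G] [IsRightCancelAdd G] [DecidableEq G]

lemma card_image_add_inter (X U : Finset G) (y : G) :
    #(X.image (· + y) ∩ U) = #{x ∈ X | x + y ∈ U} := by
  rw [← filter_mem_eq_inter, filter_image,
    card_image_of_injective _ (add_left_injective y)]

lemma sum_card_image_add_inter (X Y U : Finset G) :
    ∑ y ∈ Y, #(X.image (· + y) ∩ U) = #{xy ∈ X ×ˢ Y | xy.1 + xy.2 ∈ U} := by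
  simp_rw [card_image_add_inter, card_filter, sum_product_right]

lemma card_biUnion_image_add_le {k : ℕ} (X : Finset G) (y : Fin k → G) :
    #(Finset.univ.biUnion fun j => X.image (· + y j)) ≤ k * #X := by
  refine card_biUnion_le.trans_eq ?_
  simp only [card_image_of_injective _ (add_left_injective _), sum_const, card_univ,
    Fintype.card_fin, smul_eq_mul]

end Translates

section Energy

variable {G : Type*} [AddCommGroup G] [DecidableEq G]

lemma energy_eq_addEnergy (X Y : Finset G) : energy X Y = addEnergy X Y := rfl

lemma sum_card_image_add_inter_sq_le (X Y U : Finset G) :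
    (∑ y ∈ Y, #(X.image (· + y) ∩ U)) ^ 2 ≤ #U * energy X Y := by
  rw [sum_card_image_add_inter, energy_eq_addEnergy]
  exact card_sq_le_card_mul_addEnergy X Y U

lemma sq_card_mul_lt_of_saturated {k : ℕ} (X Y S : Finset G) (hSY : S ⊆ Y) (hS : S.Nonempty)
    (y : Fin k → G) {t : ℝ} (ht : 0 ≤ t)
    (hsat : ∀ z ∈ S, t < #(X.image (· + z) ∩ Finset.univ.biUnion fun j => X.image (· + y j))) :
    (#S * t) ^ 2 < k * #X * energy X Y := by
  set U := Finset.univ.biUnion fun j => X.image (· + y j)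
  have hsum : #S * t < ∑ z ∈ Y, (#(X.image (· + z) ∩ U) : ℝ) :=
    calc #S * t < ∑ z ∈ S, (#(X.image (· + z) ∩ U) : ℝ) := by
          simpa using sum_lt_sum_of_nonempty hS hsat
      _ ≤ ∑ z ∈ Y, (#(X.image (· + z) ∩ U) : ℝ) :=
          sum_le_sum_of_subset_of_nonneg hSY fun _ _ _ => by positivity
  calc ((#S : ℝ) * t) ^ 2 < (∑ z ∈ Y, (#(X.image (· + z) ∩ U) : ℝ)) ^ 2 := by gcongr
    _ ≤ ((#U * energy X Y : ℕ) : ℝ) := by exact_mod_cast sum_card_image_add_inter_sq_le X Y U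
    _ ≤ k * #X * energy X Y := by push_cast; gcongr; exact_mod_cast card_biUnion_image_add_le X y

end Energy

section Deviation

lemma le_card_filter_abs_ge {ι : Type*} (s : Finset ι) (g : ι → ℝ) {ε M : ℝ} (hε : 0 ≤ ε)
    (hM : ∀ i ∈ s, |g i| ≤ M) (hsum : ε * #s ≤ |∑ i ∈ s, g i|) :
    ε * #s ≤ 2 * M * #{i ∈ s | ε / 2 ≤ |g i|} := by
  have hbig : ∑ i ∈ s with ε / 2 ≤ |g i|, |g i| ≤ #{i ∈ s | ε / 2 ≤ |g i|} * M := by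
    simpa using sum_le_card_nsmul _ _ M fun i hi => hM i (mem_filter.1 hi).1
  have hsmall : ∑ i ∈ s with ¬ ε / 2 ≤ |g i|, |g i| ≤ #s * (ε / 2) := by
    calc _ ≤ #{i ∈ s | ¬ ε / 2 ≤ |g i|} * (ε / 2) := by
          simpa using sum_le_card_nsmul _ _ (ε / 2) fun i hi => (not_le.1 (mem_filter.1 hi).2).le
      _ ≤ #s * (ε / 2) := by gcongr; exact filter_subset _ _
  have := (hsum.trans (abs_sum_le_sum_abs g s)).trans_eq
    (sum_filter_add_sum_filter_not s (fun i => ε / 2 ≤ |g i|) _).symm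
  linarith

variable {G : Type*} [AddCommGroup G] [DecidableEq G]

lemma sigmaA_singleton (A X : Finset G) (y : G) :
    sigmaA A X {y} = #{x ∈ X | x + y ∈ A} / #X - 1 / 2 := by
  simp only [sigmaA, sum_singleton, card_singleton, Nat.cast_one, mul_one]
  rw [sum_boole]

lemma abs_sigmaA_singleton_le (A X : Finset G) (y : G) : |sigmaA A X {y}| ≤ 1 / 2 := by
  have hX : (0 : ℝ) ≤ #X := Nat.cast_nonneg _
  have hfrac : (#{x ∈ X | x + y ∈ A} : ℝ) / #X ≤ 1 :=
    div_le_one_of_le₀ (by exact_mod_cast card_filter_le _ _) hX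
  rw [sigmaA_singleton, abs_le]
  constructor <;> linarith [div_nonneg (Nat.cast_nonneg (α := ℝ) #{x ∈ X | x + y ∈ A}) hX]

lemma sigmaA_mul_card_eq_sum (A X Y : Finset G) :
    sigmaA A X Y * #Y = ∑ y ∈ Y, sigmaA A X {y} := by
  rcases Y.eq_empty_or_nonempty with rfl | hY
  · simp
  have hY0 : (#Y : ℝ) ≠ 0 := by exact_mod_cast hY.card_ne_zero
  simp only [sigmaA, sum_singleton, card_singleton, Nat.cast_one, mul_one]
  rw [sum_sub_distrib, ← sum_div, sum_comm, sum_const, nsmul_eq_mul, sub_mul, div_mul_eq_div_div,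
    div_mul_cancel₀ _ hY0]
  ring

lemma le_card_filter_abs_sigmaA_singleton (A X Y : Finset G) {ε : ℝ} (hε : 0 ≤ ε)
    (hσ : ε ≤ |sigmaA A X Y|) :
    ε * #Y ≤ #{y ∈ Y | ε / 2 ≤ |sigmaA A X {y}|} := by
  have := le_card_filter_abs_ge Y (fun y => sigmaA A X {y}) hε
    (fun y _ => abs_sigmaA_singleton_le A X y) (by
      rw [← sigmaA_mul_card_eq_sum, abs_mul, Nat.abs_cast]
      gcongr)
  linarith

end Deviation

theorem exists_spread_translates_with_deviation {G : Type*} [AddCommGroup G] [DecidableEq G]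
    (A X Y : Finset G) (hX : X.Nonempty) (hY : Y.Nonempty) (n : ℕ) (hn : X.card = n)
    (ε K : ℝ) (hε : 0 < ε) (hε' : ε ≤ 1 / 2) (hK : 0 < K)
    (hE : (energy X Y : ℝ) ≤ (X.card : ℝ) ^ 2 * Y.card / K)
    (hσ : ε ≤ |sigmaA A X Y|) :
    ∃ k : ℕ, ε ^ 4 * Y.card * K / (4 * n) < (k : ℝ) ∧
      ∃ y : Fin k → G, (∀ i, y i ∈ Y) ∧
        (∀ i : Fin k, 0 < (i : ℕ) →
          ((((X.image (· + y i)) ∩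
              (Finset.univ.filter fun j : Fin k => j < i).biUnion
                fun j => X.image (· + y j)).card : ℝ) ≤ ε * n / 2)) ∧
        ∀ j : Fin k, ε / 2 ≤ |sigmaA A X {y j}| := by
  subst hn
  have hX0 : (0 : ℝ) < #X := by exact_mod_cast hX.card_pos
  have hY0 : (0 : ℝ) < #Y := by exact_mod_cast hY.card_pos
  set Y' := Y.filter fun z => ε / 2 ≤ |sigmaA A X {z}|
  have hY' : ε * #Y ≤ #Y' := le_card_filter_abs_sigmaA_singleton A X Y hε.le hσ
  have hY'ne : Y'.Nonempty :=
    card_pos.1 (by exact_mod_cast (by positivity : 0 < ε * #Y).trans_le hY')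
  obtain ⟨k, y, hyY', hspread, hsat⟩ := exists_saturated_spreadSeq (fun z => X.image (· + z)) Y'
    (ε * #X / 2) fun z _ => by rw [card_image_of_injective _ (add_left_injective z)]; nlinarith
  refine ⟨k, ?_, y, fun i => (mem_filter.1 (hyY' i)).1, hspread, fun i => (mem_filter.1 (hyY' i)).2⟩
  have hcount : (ε * #Y * (ε * #X / 2)) ^ 2 < k * #X * (#X ^ 2 * #Y / K) :=
    calc _ ≤ (#Y' * (ε * #X / 2)) ^ 2 := by gcongr
      _ < k * #X * energy X Y :=
          sq_card_mul_lt_of_saturated X Y Y' (filter_subset _ _) hY'ne y (by positivity) hsat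
      _ ≤ k * #X * (#X ^ 2 * #Y / K) := by gcongr
  rw [div_lt_iff₀ (by positivity)]
  refine lt_of_mul_lt_mul_right (a := (#Y * #X ^ 2 / 4 : ℝ)) ?_ (by positivity)
  calc ε ^ 4 * #Y * K * (#Y * #X ^ 2 / 4) = (ε * #Y * (ε * #X / 2)) ^ 2 * K := by ring
    _ < k * #X * (#X ^ 2 * #Y / K) * K := mul_lt_mul_of_pos_right hcount hK
    _ = k * (4 * #X) * (#Y * #X ^ 2 / 4) := by field_simp
end
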